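/- arXiv:1503.07086 — 4 statements merged into one kernel-verified Lean document; each statement's English description precedes it below -/
import Mathlib

section
/- For all real numbers a, b ≥ 0 and λ, μ > 0, one has a^λ · b^μ ≤ (λ^λ μ^μ / (λ+μ)^(λ+μ)) · (a+b)^(λ+μ). -/
/-! Weighted AM–GM with weights `l/(l+m)`, `m/(l+m)` applied to the points `a/l`, `b/m` gives
`(a/l)^(l/(l+m)) (b/m)^(m/(l+m)) ≤ (a+b)/(l+m)`; raising both sides to the power `l+m`
clears the fractional exponents. -/

open Real

namespace Real

lemma rpow_div_mul_rpow_div_rpow {x y s : ℝ} (hx : 0 ≤ x) (hy : 0 ≤ y) (hs : s ≠ 0) (p q : ℝ) :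
    (x ^ (p / s) * y ^ (q / s)) ^ s = x ^ p * y ^ q := by
  rw [mul_rpow (rpow_nonneg hx _) (rpow_nonneg hy _), ← rpow_mul hx, ← rpow_mul hy,
    div_mul_cancel₀ _ hs, div_mul_cancel₀ _ hs]

lemma div_rpow_mul_div_rpow_le_add_div {a b l m : ℝ} (ha : 0 ≤ a) (hb : 0 ≤ b)
    (hl : 0 < l) (hm : 0 < m) :
    (a / l) ^ (l / (l + m)) * (b / m) ^ (m / (l + m)) ≤ (a + b) / (l + m) := by
  have hs : 0 < l + m := add_pos hl hm
  calc (a / l) ^ (l / (l + m)) * (b / m) ^ (m / (l + m))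
      ≤ l / (l + m) * (a / l) + m / (l + m) * (b / m) :=
        geom_mean_le_arith_mean2_weighted (by positivity) (by positivity) (by positivity)
          (by positivity) (by field_simp)
    _ = (a + b) / (l + m) := by field_simp

end Real

theorem young_type_inequality (a b l m : ℝ) (ha : 0 ≤ a) (hb : 0 ≤ b)
    (hl : 0 < l) (hm : 0 < m) :
    a ^ l * b ^ m ≤ (l ^ l * m ^ m / (l + m) ^ (l + m)) * (a + b) ^ (l + m) := by
  have hs : 0 < l + m := add_pos hl hm
  have key : (a / l) ^ l * (b / m) ^ m ≤ ((a + b) / (l + m)) ^ (l + m) := by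
    rw [← rpow_div_mul_rpow_div_rpow (div_nonneg ha hl.le) (div_nonneg hb hm.le) hs.ne']
    exact rpow_le_rpow (by positivity) (div_rpow_mul_div_rpow_le_add_div ha hb hl hm) hs.le
  rw [div_rpow ha hl.le, div_rpow hb hm.le, div_rpow (by positivity) hs.le] at key
  calc a ^ l * b ^ m = a ^ l / l ^ l * (b ^ m / m ^ m) * (l ^ l * m ^ m) := by field_simp
    _ ≤ (a + b) ^ (l + m) / (l + m) ^ (l + m) * (l ^ l * m ^ m) :=
        mul_le_mul_of_nonneg_right key (by positivity)
    _ = (l ^ l * m ^ m / (l + m) ^ (l + m)) * (a + b) ^ (l + m) := by ring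
end

section
/- Let φ : ℝ → ℝ be continuously differentiable with φ' ≥ 0, and suppose there exist r > 1 and M ≥ 0 such that φ is twice differentiable with |φ''(s)| ≤ M · φ'(s)^(1/r) for all s ∈ ℝ. Then for all a, b ∈ ℝ, |∫₀¹ (φ'(t·a + (1−t)·b) − φ'(b)) dt| ≤ |a − b| · M · ((r−1)/(2r−1))^((r−1)/r) · (∫₀¹ φ'(t·a + (1−t)·b) dt)^(1/r). -/
open Real intervalIntegral MeasureTheory Set

/-!
Put `g t = φ' (t a + (1 - t) b)`. The structural assumption gives `|g'| ≤ |a - b| M g ^ (1/r)`, hence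
`|g t - g 0| ≤ |a - b| M ∫₀ᵗ g ^ (1/r)`. Integrating over `t ∈ [0, 1]` turns the double integral into
`∫₀¹ (1 - t) g(t) ^ (1/r) dt`, and Hölder's inequality with exponents `r / (r - 1)` and `r` bounds
this by `(∫₀¹ (1 - t) ^ (r / (r - 1)))^((r - 1) / r) (∫₀¹ g) ^ (1/r)`, the first integral being
`(r - 1) / (2 r - 1)`.
-/

theorem Continuous.memLp_restrict_Ioc {E : Type*} [NormedAddCommGroup E] {f : ℝ → E}
    (hf : Continuous f) (p : ENNReal) (a b : ℝ) : MemLp f p (volume.restrict (Ioc a b)) := by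
  obtain ⟨C, hC⟩ := (isCompact_Icc (a := a) (b := b)).exists_bound_of_continuousOn hf.continuousOn
  exact .of_bound hf.aestronglyMeasurable C <|
    (ae_restrict_mem measurableSet_Ioc).mono fun x hx => hC x (Ioc_subset_Icc_self hx)

theorem integral_one_sub_rpow {p : ℝ} (hp : -1 < p) :
    ∫ t in (0:ℝ)..1, (1 - t) ^ p = 1 / (p + 1) := by
  rw [integral_comp_sub_left (fun x => x ^ p), sub_self, sub_zero, integral_rpow (.inl hp),
    one_rpow, zero_rpow (by linarith)]
  ring

theorem integral_one_sub_mul_rpow_le {g : ℝ → ℝ} (hg : Continuous g) (hg0 : ∀ t, 0 ≤ g t)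
    {r : ℝ} (hr : 1 < r) :
    ∫ t in (0:ℝ)..1, (1 - t) * g t ^ (1 / r) ≤
      ((r - 1) / (2 * r - 1)) ^ ((r - 1) / r) * (∫ t in (0:ℝ)..1, g t) ^ (1 / r) := by
  have hr0 : 0 < r := by linarith
  have hr1 : 0 < r - 1 := by linarith
  have hpq : HolderConjugate (r / (r - 1)) r := by
    rw [holderConjugate_iff]
    refine ⟨by rw [one_lt_div hr1]; linarith, ?_⟩
    field_simp
    ring
  have hholder := integral_mul_le_Lp_mul_Lq_of_nonneg (μ := volume.restrict (Ioc 0 1)) hpq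
    (f := fun t => 1 - t) (g := fun t => g t ^ (1 / r))
    ((ae_restrict_mem measurableSet_Ioc).mono fun t ht => sub_nonneg.2 ht.2)
    (.of_forall fun t => rpow_nonneg (hg0 t) _)
    ((continuous_const.sub continuous_id).memLp_restrict_Ioc _ 0 1)
    ((hg.rpow_const fun _ => .inr (by positivity)).memLp_restrict_Ioc _ 0 1)
  have hweight : 1 / (r / (r - 1) + 1) = (r - 1) / (2 * r - 1) := by
    rw [div_add_one hr1.ne', one_div_div]
    ring
  have hexp : 1 / (r / (r - 1)) = (r - 1) / r := one_div_div _ _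
  simp only [← integral_of_le zero_le_one, one_div r, rpow_inv_rpow (hg0 _) hr0.ne'] at hholder
  rwa [integral_one_sub_rpow (by linarith [div_pos hr0 hr1]), hweight, hexp, ← one_div] at hholder

theorem integral_primitive_eq_integral_sub_mul {h : ℝ → ℝ} (hh : Continuous h) (a b : ℝ) :
    ∫ t in a..b, ∫ s in a..t, h s = ∫ t in a..b, (b - t) * h t := by
  have hparts := integral_mul_deriv_eq_deriv_mul (a := a) (b := b) (v := fun t => t - b)
    (v' := fun _ => 1) (fun t _ => (hh.integral_hasStrictDerivAt a t).hasDerivAt)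
    (fun t _ => (hasDerivAt_id t).sub_const b) (hh.intervalIntegrable a b)
    (continuous_const.intervalIntegrable a b)
  simp only [mul_one, sub_self, mul_zero, integral_same, zero_mul, zero_sub] at hparts
  rw [hparts, ← intervalIntegral.integral_neg]
  exact integral_congr fun t _ => by ring

theorem abs_sub_le_integral_of_abs_deriv_le {g w : ℝ → ℝ} {a b : ℝ} (hab : a ≤ b)
    (hg : ContDiff ℝ 1 g) (hw : IntervalIntegrable w volume a b)
    (hgw : ∀ t ∈ Icc a b, |deriv g t| ≤ w t) :
    |g b - g a| ≤ ∫ t in a..b, w t := by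
  have hg' : IntervalIntegrable (deriv g) volume a b :=
    (hg.continuous_deriv le_rfl).intervalIntegrable a b
  rw [← integral_deriv_eq_sub (fun t _ => hg.differentiable one_ne_zero t) hg']
  calc |∫ t in a..b, deriv g t| ≤ ∫ t in a..b, |deriv g t| := abs_integral_le_integral_abs hab
    _ ≤ ∫ t in a..b, w t := integral_mono_on hab hg'.abs hw hgw

theorem abs_integral_sub_le_of_abs_deriv_le_mul_rpow {g : ℝ → ℝ} {r K : ℝ}
    (hg : ContDiff ℝ 1 g) (hg0 : ∀ t, 0 ≤ g t) (hr : 1 < r) (hK : 0 ≤ K)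
    (hgK : ∀ t, |deriv g t| ≤ K * g t ^ (1 / r)) :
    |∫ t in (0:ℝ)..1, (g t - g 0)| ≤
      K * ((r - 1) / (2 * r - 1)) ^ ((r - 1) / r) * (∫ t in (0:ℝ)..1, g t) ^ (1 / r) := by
  have hKgr : Continuous fun t => K * g t ^ (1 / r) :=
    continuous_const.mul (hg.continuous.rpow_const fun _ => .inr (by positivity))
  calc |∫ t in (0:ℝ)..1, (g t - g 0)|
      ≤ ∫ t in (0:ℝ)..1, |g t - g 0| := abs_integral_le_integral_abs zero_le_one
    _ ≤ ∫ t in (0:ℝ)..1, ∫ s in (0:ℝ)..t, K * g s ^ (1 / r) := by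
        refine integral_mono_on zero_le_one ?_ ?_ fun t ht =>
          abs_sub_le_integral_of_abs_deriv_le ht.1 hg (hKgr.intervalIntegrable 0 t)
            fun s _ => hgK s
        · exact (hg.continuous.sub continuous_const).abs.intervalIntegrable 0 1
        · exact (continuous_primitive (fun _ _ => hKgr.intervalIntegrable _ _) 0).intervalIntegrable
            0 1
    _ = K * ∫ t in (0:ℝ)..1, (1 - t) * g t ^ (1 / r) := by
        rw [integral_primitive_eq_integral_sub_mul hKgr, ← intervalIntegral.integral_const_mul]
        exact integral_congr fun t _ => by ring
    _ ≤ K * (((r - 1) / (2 * r - 1)) ^ ((r - 1) / r) * (∫ t in (0:ℝ)..1, g t) ^ (1 / r)) :=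
        mul_le_mul_of_nonneg_left (integral_one_sub_mul_rpow_le hg.continuous hg0 hr) hK
    _ = _ := (mul_assoc _ _ _).symm

theorem lemma_one (φ : ℝ → ℝ) (r M : ℝ)
    (hφ : ContDiff ℝ 2 φ)
    (hmono : ∀ s : ℝ, 0 ≤ deriv φ s)
    (hr : 1 < r) (hM : 0 ≤ M)
    (hstruct : ∀ s : ℝ, |deriv (deriv φ) s| ≤ M * (deriv φ s) ^ (1 / r))
    (a b : ℝ) :
    |∫ t in (0:ℝ)..1, (deriv φ (t * a + (1 - t) * b) - deriv φ b)| ≤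
      |a - b| * (M * ((r - 1) / (2 * r - 1)) ^ ((r - 1) / r)) *
        (∫ t in (0:ℝ)..1, deriv φ (t * a + (1 - t) * b)) ^ (1 / r) := by
  have hφ' : ContDiff ℝ 1 (deriv φ) := hφ.deriv'
  set g : ℝ → ℝ := fun t => deriv φ (t * a + (1 - t) * b)
  have hline : ∀ t, HasDerivAt (fun t : ℝ => t * a + (1 - t) * b) (a - b) t := fun t =>
    (((hasDerivAt_id' t).mul_const a).add
      (((hasDerivAt_id' t).const_sub 1).mul_const b)).congr_deriv (by ring)
  have hderiv : ∀ t, |deriv g t| ≤ |a - b| * M * g t ^ (1 / r) := fun t => by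
    have hg' : HasDerivAt g (deriv (deriv φ) (t * a + (1 - t) * b) * (a - b)) t :=
      (hφ'.differentiable one_ne_zero _).hasDerivAt.comp t (hline t)
    rw [hg'.deriv, abs_mul, mul_comm, mul_assoc]
    exact mul_le_mul_of_nonneg_left (hstruct _) (abs_nonneg _)
  have key := abs_integral_sub_le_of_abs_deriv_le_mul_rpow (g := g)
    (hφ'.comp (by fun_prop)) (fun t => hmono _) hr (by positivity) hderiv
  simpa only [g, zero_mul, sub_zero, one_mul, zero_add, mul_assoc] using key
end

section
/- Let φ : ℝ → ℝ be C² and monotonically increasing, and suppose there exist r > 1 and M ≥ 0 with |φ''(s)| ≤ M φ'(s)^(1/r) for all s ∈ ℝ. Then there exists a constant c₁ > 0 such that φ'(s) ≤ c₁(1 + |s|^(r/(r−1))) for all s ∈ ℝ. -/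
/-!
With `a = 1 - 1/r`, the function `g = (φ' + 1) ^ a` has
`|g'| = a (φ' + 1) ^ (-1/r) |φ''| ≤ a |M|`: the exponent `a - 1 = -1/r` exactly absorbs
the factor `φ' ^ (1/r)` of the structure condition.
So `g` grows at most linearly, and `φ' + 1 = g ^ (1/a)` with `1/a = r/(r-1)`.
-/

open Real

theorem abs_deriv_add_one_rpow_le {ψ : ℝ → ℝ} {θ M : ℝ} (hψ : Differentiable ℝ ψ)
    (hψ0 : ∀ s, 0 ≤ ψ s) (hθ0 : 0 ≤ θ) (hθ1 : θ ≤ 1)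
    (hψ' : ∀ s, |deriv ψ s| ≤ M * ψ s ^ θ) (s : ℝ) :
    |deriv (fun t => (ψ t + 1) ^ (1 - θ)) s| ≤ (1 - θ) * |M| := by
  have hpos : 0 < ψ s + 1 := by linarith [hψ0 s]
  have hderiv : deriv (fun t => (ψ t + 1) ^ (1 - θ)) s
      = (1 - θ) * (ψ s + 1) ^ (-θ) * deriv ψ s := by
    rw [deriv_rpow_const ((hψ s).add_const 1) (.inl hpos.ne'), deriv_add_const]
    ring_nf
  have hratio : (ψ s + 1) ^ (-θ) * ψ s ^ θ ≤ 1 := by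
    calc (ψ s + 1) ^ (-θ) * ψ s ^ θ ≤ (ψ s + 1) ^ (-θ) * (ψ s + 1) ^ θ := by
          gcongr
          · exact hψ0 s
          · linarith
      _ = 1 := by rw [← rpow_add hpos, neg_add_cancel, rpow_zero]
  rw [hderiv, abs_mul, abs_mul, abs_of_nonneg (sub_nonneg.2 hθ1), abs_of_pos (by positivity)]
  calc (1 - θ) * (ψ s + 1) ^ (-θ) * |deriv ψ s|
      ≤ (1 - θ) * (ψ s + 1) ^ (-θ) * (|M| * ψ s ^ θ) := by
        gcongr
        exact (hψ' s).trans (mul_le_mul_of_nonneg_right (le_abs_self M) (rpow_nonneg (hψ0 s) θ))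
    _ = (1 - θ) * |M| * ((ψ s + 1) ^ (-θ) * ψ s ^ θ) := by ring
    _ ≤ (1 - θ) * |M| :=
        mul_le_of_le_one_right (mul_nonneg (sub_nonneg.2 hθ1) (abs_nonneg M)) hratio

theorem le_add_mul_abs_of_abs_deriv_le {g : ℝ → ℝ} {C : ℝ} (hg : Differentiable ℝ g)
    (hC : ∀ s, |deriv g s| ≤ C) (s : ℝ) : g s ≤ g 0 + C * |s| := by
  have h := convex_univ.norm_image_sub_le_of_norm_deriv_le (fun x _ => hg x) (fun x _ => hC x)
    (Set.mem_univ 0) (Set.mem_univ s)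
  rw [Real.norm_eq_abs, Real.norm_eq_abs, sub_zero] at h
  linarith [le_abs_self (g s - g 0)]

theorem one_add_rpow_le_two_rpow_mul {x p : ℝ} (hx : 0 ≤ x) (hp : 1 ≤ p) :
    (1 + x) ^ p ≤ 2 ^ (p - 1) * (1 + x ^ p) := by
  lift x to NNReal using hx
  have h := NNReal.rpow_add_le_mul_rpow_add_rpow 1 x hp
  rw [NNReal.one_rpow] at h
  exact_mod_cast h

theorem le_of_rpow_le_add_mul_abs {x a B C s : ℝ} (hx : 0 ≤ x) (ha : 0 < a) (ha1 : a ≤ 1)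
    (hB : 0 ≤ B) (hC : 0 ≤ C) (h : x ^ a ≤ B + C * |s|) :
    x ≤ 2 ^ (a⁻¹ - 1) * (B + C) ^ a⁻¹ * (1 + |s| ^ a⁻¹) := by
  calc x = (x ^ a) ^ a⁻¹ := by rw [← rpow_mul hx, mul_inv_cancel₀ ha.ne', rpow_one]
    _ ≤ ((B + C) * (1 + |s|)) ^ a⁻¹ := by
        gcongr
        nlinarith [abs_nonneg s]
    _ = (B + C) ^ a⁻¹ * (1 + |s|) ^ a⁻¹ := mul_rpow (by positivity) (by positivity)
    _ ≤ (B + C) ^ a⁻¹ * (2 ^ (a⁻¹ - 1) * (1 + |s| ^ a⁻¹)) := by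
        gcongr
        exact one_add_rpow_le_two_rpow_mul (abs_nonneg s) ((one_le_inv₀ ha).2 ha1)
    _ = 2 ^ (a⁻¹ - 1) * (B + C) ^ a⁻¹ * (1 + |s| ^ a⁻¹) := by ring

theorem phi_deriv_growth_general (φ : ℝ → ℝ) (r M : ℝ)
    (hφ : ContDiff ℝ 2 φ) (hmono : Monotone φ)
    (hr : 1 < r)
    (hstruct : ∀ s : ℝ, |deriv (deriv φ) s| ≤ M * (deriv φ s) ^ (1 / r)) :
    ∃ c₁ : ℝ, 0 < c₁ ∧ ∀ s : ℝ, deriv φ s ≤ c₁ * (1 + |s| ^ (r / (r - 1))) := by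
  have hψ : Differentiable ℝ (deriv φ) := hφ.differentiable_deriv_two
  have hψ0 : ∀ s, 0 ≤ deriv φ s := fun s => hmono.deriv_nonneg
  have hθ0 : 0 < 1 / r := by positivity
  have hθ1 : 1 / r < 1 := (div_lt_one (by linarith)).2 hr
  have hexp : (1 - 1 / r)⁻¹ = r / (r - 1) := by field_simp
  set g := fun t => (deriv φ t + 1) ^ (1 - 1 / r)
  have hg : Differentiable ℝ g := fun t =>
    ((hψ t).add_const 1).rpow_const (.inl (by linarith [hψ0 t]))
  have hg0 : 0 < g 0 := rpow_pos_of_pos (by linarith [hψ0 0]) _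
  have hC : 0 ≤ (1 - 1 / r) * |M| := by nlinarith [abs_nonneg M]
  refine ⟨2 ^ ((1 - 1 / r)⁻¹ - 1) * (g 0 + (1 - 1 / r) * |M|) ^ (1 - 1 / r)⁻¹, ?_,
    fun s => ?_⟩
  · have : 0 < g 0 + (1 - 1 / r) * |M| := by linarith
    positivity
  have hlinear := le_add_mul_abs_of_abs_deriv_le hg
    (abs_deriv_add_one_rpow_le hψ hψ0 hθ0.le hθ1.le hstruct) s
  have hψs := le_of_rpow_le_add_mul_abs (by linarith [hψ0 s]) (by linarith) (by linarith)
    hg0.le hC hlinear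
  rw [← hexp]
  linarith

theorem phi_deriv_growth (φ : ℝ → ℝ) (r M : ℝ)
    (hφ : ContDiff ℝ 2 φ) (hmono : Monotone φ)
    (hr : 1 < r) (hM : 0 ≤ M)
    (hstruct : ∀ s : ℝ, |deriv (deriv φ) s| ≤ M * (deriv φ s) ^ (1 / r)) :
    ∃ c₁ : ℝ, 0 < c₁ ∧ ∀ s : ℝ, deriv φ s ≤ c₁ * (1 + |s| ^ (r / (r - 1))) :=
  phi_deriv_growth_general φ r M hφ hmono hr hstruct
end

section
/- Let φ : ℝ → ℝ be C² and monotonically increasing, and suppose there exist r > 1 and M ≥ 0 with |φ''(s)| ≤ M φ'(s)^(1/r) for all s ∈ ℝ. Then there exists a constant c₀ > 0 such that |φ(s)| ≤ c₀(1 + |s|^((2r−1)/(r−1))) for all s ∈ ℝ. -/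
/-!
Put `h = (φ' + 1) ^ (1 - 1/r)`. The structural condition gives
`|h'| = (1 - 1/r) |φ''| (φ' + 1) ^ (-1/r) ≤ M (φ' / (φ' + 1)) ^ (1/r) ≤ M`, so `h` grows at most
linearly and `φ' ≤ h ^ (r/(r-1))` grows at most like `|s| ^ (r/(r-1))`. Integrating once more
gives the exponent `r/(r-1) + 1 = (2r-1)/(r-1)`.
-/

open Real Metric

lemma one_add_rpow_le {q x : ℝ} (hq : 1 ≤ q) (hx : 0 ≤ x) :
    (1 + x) ^ q ≤ 2 ^ (q - 1) * (1 + x ^ q) := by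
  lift x to NNReal using hx
  have := NNReal.rpow_add_le_mul_rpow_add_rpow 1 x hq
  rw [NNReal.one_rpow] at this
  exact_mod_cast this

lemma add_mul_rpow_mul_le {A B t p : ℝ} (hA : 0 ≤ A) (hB : 0 ≤ B) (ht : 0 ≤ t) (hp : 0 ≤ p) :
    (A + B * t) ^ p * t ≤ (2 * (A + B)) ^ p * (1 + t ^ (p + 1)) := by
  have hbase : A + B * t ≤ (A + B) * (1 + t) := by nlinarith
  calc (A + B * t) ^ p * t ≤ ((A + B) * (1 + t)) ^ p * (1 + t) := by gcongr; linarith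
    _ = (A + B) ^ p * (1 + t) ^ (p + 1) := by
      rw [mul_rpow (by positivity) (by positivity), rpow_add_one (by positivity)]; ring
    _ ≤ (A + B) ^ p * (2 ^ p * (1 + t ^ (p + 1))) := by
      gcongr
      simpa using one_add_rpow_le (q := p + 1) (by linarith) ht
    _ = (2 * (A + B)) ^ p * (1 + t ^ (p + 1)) := by
      rw [mul_rpow zero_le_two (by positivity)]; ring

lemma abs_sub_le_of_abs_deriv_le {φ : ℝ → ℝ} {A B p : ℝ} (hφ : Differentiable ℝ φ)
    (hA : 0 ≤ A) (hB : 0 ≤ B) (hp : 0 ≤ p) (hφ' : ∀ x, |deriv φ x| ≤ (A + B * |x|) ^ p)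
    (s : ℝ) : |φ s - φ 0| ≤ (A + B * |s|) ^ p * |s| := by
  have bound : ∀ x ∈ closedBall (0 : ℝ) |s|, ‖deriv φ x‖ ≤ (A + B * |s|) ^ p := by
    intro x hx
    rw [mem_closedBall_zero_iff, Real.norm_eq_abs] at hx
    exact (hφ' x).trans (by gcongr)
  simpa using (convex_closedBall (0 : ℝ) |s|).norm_image_sub_le_of_norm_deriv_le
    (fun x _ => hφ x) bound (mem_closedBall_self (abs_nonneg s))
    (by simp)

section StructuralCondition

variable {f : ℝ → ℝ} {r M : ℝ}

lemma abs_deriv_rpow_add_one_le (hf : Differentiable ℝ f) (hf0 : ∀ s, 0 ≤ f s) (hr : 1 < r)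
    (hM : 0 ≤ M) (hbound : ∀ s, |deriv f s| ≤ M * f s ^ (1 / r)) (s : ℝ) :
    |deriv (fun t => (f t + 1) ^ (1 - 1 / r)) s| ≤ M := by
  have hg : 0 < f s + 1 := by linarith [hf0 s]
  have ha : 0 ≤ 1 - 1 / r := by
    rw [sub_nonneg, div_le_one (by linarith)]; exact hr.le
  have ha1 : 1 - 1 / r ≤ 1 := by
    have : 0 ≤ 1 / r := by positivity
    linarith
  have hratio : f s ^ (1 / r) * (f s + 1) ^ (-(1 / r)) ≤ 1 := by
    rw [rpow_neg hg.le, ← div_eq_mul_inv, div_le_one (by positivity)]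
    gcongr
    · exact hf0 s
    · linarith
  rw [(((hf s).hasDerivAt.add_const 1).rpow_const (Or.inl hg.ne')).deriv,
    show 1 - 1 / r - 1 = -(1 / r) by ring, abs_mul, abs_mul, abs_of_nonneg ha,
    abs_of_pos (rpow_pos_of_pos hg _)]
  calc |deriv f s| * (1 - 1 / r) * (f s + 1) ^ (-(1 / r))
      ≤ M * f s ^ (1 / r) * 1 * (f s + 1) ^ (-(1 / r)) := by
        gcongr
        · exact mul_nonneg hM (rpow_nonneg (hf0 s) _)
        · exact hbound s
    _ = M * (f s ^ (1 / r) * (f s + 1) ^ (-(1 / r))) := by ring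
    _ ≤ M := mul_le_of_le_one_right hM hratio

lemma le_rpow_of_abs_deriv_le (hf : Differentiable ℝ f) (hf0 : ∀ s, 0 ≤ f s) (hr : 1 < r)
    (hM : 0 ≤ M) (hbound : ∀ s, |deriv f s| ≤ M * f s ^ (1 / r)) (s : ℝ) :
    f s ≤ ((f 0 + 1) ^ (1 - 1 / r) + M * |s|) ^ (r / (r - 1)) := by
  set h : ℝ → ℝ := fun t => (f t + 1) ^ (1 - 1 / r)
  have hpos : ∀ t, 0 < f t + 1 := fun t => by linarith [hf0 t]
  have hlip : |h s - h 0| ≤ M * |s| := by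
    simpa [h] using (convex_univ (𝕜 := ℝ)).norm_image_sub_le_of_norm_deriv_le
      (fun x _ => (((hf x).hasDerivAt.add_const 1).rpow_const
        (Or.inl (hpos x).ne')).differentiableAt)
      (fun x _ => abs_deriv_rpow_add_one_le hf hf0 hr hM hbound x)
      (Set.mem_univ 0) (Set.mem_univ s)
  have hinv : (1 - 1 / r) * (r / (r - 1)) = 1 := by
    field_simp [(by linarith : r - 1 ≠ 0)]
  have hp : 0 ≤ r / (r - 1) := div_nonneg (by linarith) (by linarith)
  calc f s ≤ f s + 1 := by linarith
    _ = h s ^ (r / (r - 1)) := by rw [← rpow_mul (hpos s).le, hinv, rpow_one]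
    _ ≤ (h 0 + M * |s|) ^ (r / (r - 1)) := by
      gcongr
      · exact rpow_nonneg (hpos s).le _
      · linarith [(abs_le.mp hlip).2]

end StructuralCondition

theorem phi_growth (φ : ℝ → ℝ) (r M : ℝ)
    (hφ : ContDiff ℝ 2 φ) (hmono : Monotone φ)
    (hr : 1 < r) (hM : 0 ≤ M)
    (hstruct : ∀ s : ℝ, |deriv (deriv φ) s| ≤ M * (deriv φ s) ^ (1 / r)) :
    ∃ c₀ : ℝ, 0 < c₀ ∧ ∀ s : ℝ, |φ s| ≤ c₀ * (1 + |s| ^ ((2 * r - 1) / (r - 1))) := by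
  have hφ'0 : ∀ s, 0 ≤ deriv φ s := fun s => hmono.deriv_nonneg
  have hq : (2 * r - 1) / (r - 1) = r / (r - 1) + 1 := by
    field_simp [(by linarith : r - 1 ≠ 0)]; ring
  set A := (deriv φ 0 + 1) ^ (1 - 1 / r)
  set p := r / (r - 1)
  have hA : 0 ≤ A := rpow_nonneg (by linarith [hφ'0 0]) _
  have hp : 0 ≤ p := div_nonneg (by linarith) (by linarith)
  have hφ' : ∀ x, |deriv φ x| ≤ (A + M * |x|) ^ p := fun x =>
    (abs_of_nonneg (hφ'0 x)).trans_le
      (le_rpow_of_abs_deriv_le hφ.differentiable_deriv_two hφ'0 hr hM hstruct x)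
  refine ⟨|φ 0| + (2 * (A + M)) ^ p + 1, by positivity, fun s => ?_⟩
  have hgrowth : |φ s - φ 0| ≤ (2 * (A + M)) ^ p * (1 + |s| ^ (p + 1)) :=
    (abs_sub_le_of_abs_deriv_le (hφ.differentiable two_ne_zero) hA hM hp hφ' s).trans
      (add_mul_rpow_mul_le hA hM (abs_nonneg s) hp)
  have hpow : 0 ≤ |s| ^ (p + 1) := rpow_nonneg (abs_nonneg s) _
  rw [hq]
  calc |φ s| ≤ |φ 0| + |φ s - φ 0| := by linarith [abs_sub_abs_le_abs_sub (φ s) (φ 0)]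
    _ ≤ |φ 0| + (2 * (A + M)) ^ p * (1 + |s| ^ (p + 1)) := by linarith
    _ ≤ (|φ 0| + (2 * (A + M)) ^ p + 1) * (1 + |s| ^ (p + 1)) := by
      nlinarith [abs_nonneg (φ 0), rpow_nonneg (by linarith : 0 ≤ 2 * (A + M)) p]
end
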